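/- arXiv:1211.4155 — 4 statements merged into one kernel-verified Lean document; each statement's English description precedes it below -/
import Mathlib

section
/- The curve t ↦ (α(t), β(t)), with α(t) = m^{1/p}(p+1)^{1/(2p)}/(cosh(pmt))^{1/p} and β = α', is a solution of the planar system a' = b, b' = m²a − a^{2p+1}, and it is homoclinic to the origin: (α(t), β(t)) → (0,0) as t → ±∞. -/
/-!
Write `α t = alph m p t = A * cosh (c * t) ^ q` with `c = p * m`, `q = -1 / p`. Using
`sinh² = cosh² - 1`, differentiating twice gives
`α'' = c² q² α - c² q (q - 1) A cosh (c t) ^ (q - 2)`. Here `c² q² = m²`, and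
`c² q (q - 1) = m² (p + 1) = A ^ (2p)`, while `cosh ^ (q - 2) = (cosh ^ q) ^ (2p + 1)`,
so the second term is `α ^ (2p + 1)`. As `|t| → ∞`, `cosh (c t) → ∞` and `q < 0`, so
`α → 0`; `|sinh| ≤ cosh` bounds `|α'|` by a multiple of `α`.
-/

open Real Filter

/-- The homoclinic orbit of the Klein-Gordon ODE. -/
noncomputable def alph (m : ℝ) (p : ℕ) (t : ℝ) : ℝ :=
  m ^ ((1 : ℝ) / p) * ((p : ℝ) + 1) ^ ((1 : ℝ) / (2 * p)) /
    (Real.cosh (p * m * t)) ^ ((1 : ℝ) / p)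

open Topology

section CoshRpow

variable (c q : ℝ)

theorem hasDerivAt_cosh_mul_rpow (t : ℝ) :
    HasDerivAt (fun t => cosh (c * t) ^ q) (c * q * (sinh (c * t) * cosh (c * t) ^ (q - 1))) t := by
  convert ((hasDerivAt_const_mul c).cosh.rpow_const (p := q) (Or.inl (cosh_pos (c * t)).ne'))
    using 1
  ring

theorem hasDerivAt_sinh_mul_mul_cosh_mul_rpow_sub_one (t : ℝ) :
    HasDerivAt (fun t => sinh (c * t) * cosh (c * t) ^ (q - 1))
      (c * (q * cosh (c * t) ^ q - (q - 1) * cosh (c * t) ^ (q - 2))) t := by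
  refine (((hasDerivAt_const_mul c).sinh (x := t)).mul
    (hasDerivAt_cosh_mul_rpow c (q - 1) t)).congr_deriv ?_
  have hx := cosh_pos (c * t)
  have h1 : cosh (c * t) ^ q = cosh (c * t) ^ (q - 1 - 1) * cosh (c * t) ^ 2 := by
    rw [← rpow_natCast, ← rpow_add hx]; congr 1; push_cast; ring
  have h2 : cosh (c * t) ^ (q - 1) = cosh (c * t) ^ (q - 1 - 1) * cosh (c * t) := by
    rw [← rpow_add_one hx.ne']; norm_num
  rw [h1, h2, show q - 2 = q - 1 - 1 by ring]
  linear_combination (c * (q - 1) * cosh (c * t) ^ (q - 1 - 1)) * sinh_sq (c * t)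

theorem abs_sinh_mul_cosh_rpow_sub_one_le (x : ℝ) :
    |sinh x * cosh x ^ (q - 1)| ≤ cosh x ^ q := by
  have hx := cosh_pos x
  rw [abs_mul, abs_of_pos (rpow_pos_of_pos hx _), rpow_sub_one hx.ne']
  calc |sinh x| * (cosh x ^ q / cosh x) ≤ cosh x * (cosh x ^ q / cosh x) := by
        gcongr
        rw [abs_sinh, ← cosh_abs]
        exact (sinh_lt_cosh _).le
    _ = cosh x ^ q := by field_simp

theorem tendsto_cosh_mul_cocompact {c : ℝ} (hc : c ≠ 0) :
    Tendsto (fun t => cosh (c * t)) (cocompact ℝ) atTop := by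
  refine tendsto_atTop_mono (fun t => ?_)
    (tendsto_norm_cocompact_atTop.const_mul_atTop (abs_pos.2 hc))
  calc |c| * ‖t‖ = |c * t| := by rw [abs_mul, Real.norm_eq_abs]
    _ ≤ sinh |c * t| := self_le_sinh_iff.2 (abs_nonneg _)
    _ ≤ cosh (c * t) := by rw [← cosh_abs]; exact (sinh_lt_cosh _).le

variable {c q}

theorem tendsto_cosh_mul_rpow_cocompact (hc : c ≠ 0) (hq : q < 0) :
    Tendsto (fun t => cosh (c * t) ^ q) (cocompact ℝ) (𝓝 0) := by
  simpa only [neg_neg, Function.comp_def] using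
    (tendsto_rpow_neg_atTop (neg_pos.2 hq)).comp (tendsto_cosh_mul_cocompact hc)

theorem tendsto_sinh_mul_mul_cosh_mul_rpow_sub_one_cocompact (hc : c ≠ 0) (hq : q < 0) :
    Tendsto (fun t => sinh (c * t) * cosh (c * t) ^ (q - 1)) (cocompact ℝ) (𝓝 0) :=
  squeeze_zero_norm (fun t => abs_sinh_mul_cosh_rpow_sub_one_le q (c * t))
    (tendsto_cosh_mul_rpow_cocompact hc hq)

end CoshRpow

noncomputable def alphAmplitude (m : ℝ) (p : ℕ) : ℝ :=
  m ^ ((1 : ℝ) / p) * ((p : ℝ) + 1) ^ ((1 : ℝ) / (2 * p))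

theorem alph_eq_mul_cosh_rpow (m : ℝ) (p : ℕ) :
    alph m p = fun t => alphAmplitude m p * cosh (p * m * t) ^ (-(1 / p : ℝ)) := by
  funext t
  rw [alph, alphAmplitude, rpow_neg (cosh_pos _).le, div_eq_mul_inv]

theorem alphAmplitude_pow {m : ℝ} {p : ℕ} (hm : 0 ≤ m) (hp : p ≠ 0) :
    alphAmplitude m p ^ (2 * p) = m ^ 2 * (p + 1) := by
  rw [alphAmplitude, mul_pow, ← rpow_mul_natCast hm, ← rpow_mul_natCast (by positivity)]
  push_cast
  rw [show 1 / (p : ℝ) * (2 * p) = (2 : ℕ) by field_simp; norm_num,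
    show 1 / (2 * p : ℝ) * (2 * p) = 1 by field_simp, rpow_natCast, rpow_one]

theorem hasDerivAt_alph (m : ℝ) (p : ℕ) (t : ℝ) :
    HasDerivAt (alph m p) (alphAmplitude m p * (p * m * (-(1 / p : ℝ)) *
      (sinh (p * m * t) * cosh (p * m * t) ^ (-(1 / p : ℝ) - 1)))) t := by
  rw [alph_eq_mul_cosh_rpow]
  exact (hasDerivAt_cosh_mul_rpow _ _ t).const_mul _

theorem deriv_alph (m : ℝ) (p : ℕ) :
    deriv (alph m p) = fun t => alphAmplitude m p * (p * m * (-(1 / p : ℝ)) *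
      (sinh (p * m * t) * cosh (p * m * t) ^ (-(1 / p : ℝ) - 1))) :=
  funext fun t => (hasDerivAt_alph m p t).deriv

theorem hasDerivAt_deriv_alph {m : ℝ} {p : ℕ} (hm : 0 ≤ m) (hp : p ≠ 0) (t : ℝ) :
    HasDerivAt (deriv (alph m p)) (m ^ 2 * alph m p t - alph m p t ^ (2 * p + 1)) t := by
  have hp' : (p : ℝ) ≠ 0 := Nat.cast_ne_zero.2 hp
  rw [deriv_alph, alph_eq_mul_cosh_rpow]
  set A := alphAmplitude m p
  set c : ℝ := p * m with hc
  set q : ℝ := -(1 / p) with hq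
  refine (((hasDerivAt_sinh_mul_mul_cosh_mul_rpow_sub_one c q t).const_mul (c * q)).const_mul
    A).congr_deriv ?_
  set x := cosh (c * t)
  have hx : 0 < x := cosh_pos _
  have hpow : (A * x ^ q) ^ (2 * p + 1) = m ^ 2 * (p + 1) * A * x ^ (q - 2) := by
    have hexp : q * (2 * p + 1 : ℕ) = q - 2 := by rw [hq]; push_cast; field_simp; ring
    rw [mul_pow, pow_succ, alphAmplitude_pow hm hp, ← rpow_mul_natCast hx.le, hexp]
  have hcq : c ^ 2 * q ^ 2 = m ^ 2 := by rw [hc, hq]; field_simp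
  have hcq' : c ^ 2 * q * (q - 1) = m ^ 2 * (p + 1) := by rw [hc, hq]; field_simp; ring
  rw [hpow]
  linear_combination (A * x ^ q) * hcq - A * x ^ (q - 2) * hcq'

theorem tendsto_alph_deriv_alph_cocompact {m : ℝ} {p : ℕ} (hm : m ≠ 0) (hp : p ≠ 0) :
    Tendsto (fun t => (alph m p t, deriv (alph m p) t)) (cocompact ℝ) (𝓝 (0, 0)) := by
  have hc : (p * m : ℝ) ≠ 0 := mul_ne_zero (Nat.cast_ne_zero.2 hp) hm
  have hq : -(1 / p : ℝ) < 0 := neg_neg_of_pos (by positivity)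
  rw [deriv_alph, alph_eq_mul_cosh_rpow]
  simpa only [mul_zero] using ((tendsto_cosh_mul_rpow_cocompact hc hq).const_mul _).prodMk_nhds
    (((tendsto_sinh_mul_mul_cosh_mul_rpow_sub_one_cocompact hc hq).const_mul _).const_mul _)

theorem stmt_3 (m : ℝ) (hm : 0 < m) (p : ℕ) (hp : 1 ≤ p) :
    (∀ t : ℝ, HasDerivAt (alph m p) (deriv (alph m p) t) t) ∧
    (∀ t : ℝ, HasDerivAt (deriv (alph m p))
        (m ^ 2 * alph m p t - (alph m p t) ^ (2 * p + 1)) t) ∧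
    Tendsto (fun t : ℝ => (alph m p t, deriv (alph m p) t)) atTop (nhds (0, 0)) ∧
    Tendsto (fun t : ℝ => (alph m p t, deriv (alph m p) t)) atBot (nhds (0, 0)) := by
  have hp0 : p ≠ 0 := Nat.one_le_iff_ne_zero.1 hp
  have homoclinic := tendsto_alph_deriv_alph_cocompact hm.ne' hp0
  exact ⟨fun t => (hasDerivAt_alph m p t).differentiableAt.hasDerivAt,
    hasDerivAt_deriv_alph hm.le hp0,
    homoclinic.mono_left atTop_le_cocompact, homoclinic.mono_left atBot_le_cocompact⟩
end

section
/- Suppose q : ℝ → ℝ is continuous with ∫_ℝ |q(t)| dt < ∞, and α > 0. Then every solution (x,y) of the linear system x' = y, y' = (−α² + q(t))x is bounded on ℝ; more precisely there exists C > 0 depending only on q and α such that α²x(t)² + y(t)² ≤ C(α²x(0)² + y(0)²) for all t ∈ ℝ. -/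
/-!
The energy `E = α² x² + y²` satisfies `E' = 2 q x y`, and `|2 x y| ≤ E / α`, so `|E'| ≤ (|q| / α) E`.
With `Q t = ∫₀ᵗ |q| / α`, the function `E e^{-Q}` is antitone and `E e^{Q}` is monotone, hence
`E t ≤ E 0 · e^{|Q t - Q 0|} ≤ E 0 · e^{‖q‖₁ / α}` for all `t` of either sign.
-/

open Real MeasureTheory

section Gronwall

variable {E E' Q Q' : ℝ → ℝ} (hE : ∀ t, HasDerivAt E (E' t) t) (hQ : ∀ t, HasDerivAt Q (Q' t) t)
  (hbound : ∀ t, |E' t| ≤ Q' t * E t)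
include hE hQ hbound

theorem antitone_mul_exp_neg_of_abs_deriv_le : Antitone fun t => E t * exp (-Q t) := by
  have hderiv : ∀ t, HasDerivAt (fun t => E t * exp (-Q t))
      ((E' t - Q' t * E t) * exp (-Q t)) t := fun t =>
    ((hE t).mul (hQ t).neg.exp).congr_deriv (by simp only [Pi.neg_apply]; ring)
  refine antitone_of_deriv_nonpos (fun t => (hderiv t).differentiableAt) fun t => ?_
  rw [(hderiv t).deriv]
  exact mul_nonpos_of_nonpos_of_nonneg
    (sub_nonpos.2 ((le_abs_self _).trans (hbound t))) (exp_pos _).le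

theorem monotone_mul_exp_of_abs_deriv_le : Monotone fun t => E t * exp (Q t) := by
  have hderiv : ∀ t, HasDerivAt (fun t => E t * exp (Q t))
      ((E' t + Q' t * E t) * exp (Q t)) t := fun t =>
    ((hE t).mul (hQ t).exp).congr_deriv (by ring)
  refine monotone_of_deriv_nonneg (fun t => (hderiv t).differentiableAt) fun t => ?_
  rw [(hderiv t).deriv]
  exact mul_nonneg (by linarith [neg_abs_le (E' t), hbound t]) (exp_pos _).le

theorem le_mul_exp_sub_of_abs_deriv_le {a b : ℝ} (hab : a ≤ b) :
    E b ≤ E a * exp (Q b - Q a) := by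
  have h := antitone_mul_exp_neg_of_abs_deriv_le hE hQ hbound hab
  calc E b = E b * exp (-Q b) * exp (Q b) := by rw [mul_assoc, ← exp_add]; simp
    _ ≤ E a * exp (-Q a) * exp (Q b) := by gcongr
    _ = E a * exp (Q b - Q a) := by rw [mul_assoc, ← exp_add]; ring_nf

theorem le_mul_exp_sub_of_abs_deriv_le' {a b : ℝ} (hab : a ≤ b) :
    E a ≤ E b * exp (Q b - Q a) := by
  have h := monotone_mul_exp_of_abs_deriv_le hE hQ hbound hab
  calc E a = E a * exp (Q a) * exp (-Q a) := by rw [mul_assoc, ← exp_add]; simp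
    _ ≤ E b * exp (Q b) * exp (-Q a) := by gcongr
    _ = E b * exp (Q b - Q a) := by rw [mul_assoc, ← exp_add]; ring_nf

end Gronwall

theorem intervalIntegral_sub_le_integral {g : ℝ → ℝ} (hg : Integrable g) (hg0 : 0 ≤ g) (c : ℝ)
    {a b : ℝ} (hab : a ≤ b) : (∫ s in c..b, g s) - ∫ s in c..a, g s ≤ ∫ s, g s := by
  rw [intervalIntegral.integral_interval_sub_left hg.intervalIntegrable hg.intervalIntegrable,
    intervalIntegral.integral_of_le hab]
  exact setIntegral_le_integral hg (Filter.Eventually.of_forall hg0)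

theorem abs_two_mul_le_div {α : ℝ} (hα : 0 < α) (a b : ℝ) :
    |2 * a * b| ≤ (α ^ 2 * a ^ 2 + b ^ 2) / α := by
  rw [le_div_iff₀ hα]
  rcases abs_cases (2 * a * b) with ⟨h, -⟩ | ⟨h, -⟩ <;> rw [h] <;>
    nlinarith [sq_nonneg (α * a - b), sq_nonneg (α * a + b)]

theorem stmt_6 (α : ℝ) (hα : 0 < α) (q : ℝ → ℝ) (hq : Continuous q)
    (hqint : Integrable q (volume : Measure ℝ)) :
    ∃ C > 0, ∀ x y : ℝ → ℝ,
      (∀ t, HasDerivAt x (y t) t) →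
      (∀ t, HasDerivAt y ((-α ^ 2 + q t) * x t) t) →
      ∀ t : ℝ,
        α ^ 2 * (x t) ^ 2 + (y t) ^ 2 ≤ C * (α ^ 2 * (x 0) ^ 2 + (y 0) ^ 2) := by
  set g : ℝ → ℝ := fun s => |q s| / α
  have hg : Integrable g := hqint.abs.div_const α
  have hg0 : 0 ≤ g := fun s => div_nonneg (abs_nonneg _) hα.le
  refine ⟨exp (∫ s, g s), exp_pos _, fun x y hx hy t => ?_⟩
  set E : ℝ → ℝ := fun t => α ^ 2 * x t ^ 2 + y t ^ 2
  set Q : ℝ → ℝ := fun t => ∫ s in (0 : ℝ)..t, g s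
  have hE : ∀ t, HasDerivAt E (2 * q t * x t * y t) t := fun t =>
    ((((hx t).pow 2).const_mul (α ^ 2)).add ((hy t).pow 2)).congr_deriv (by ring)
  have hQ : ∀ t, HasDerivAt Q (g t) t := fun t =>
    ((hq.abs.div_const α).integral_hasStrictDerivAt 0 t).hasDerivAt
  have hbound : ∀ t, |2 * q t * x t * y t| ≤ g t * E t := fun t =>
    calc |2 * q t * x t * y t| = |q t| * |2 * x t * y t| := by
          rw [← abs_mul]; ring_nf
      _ ≤ |q t| * (E t / α) := by gcongr; exact abs_two_mul_le_div hα _ _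
      _ = g t * E t := by ring
  have hE0 : 0 ≤ E 0 := by positivity
  show E t ≤ exp (∫ s, g s) * E 0
  rw [mul_comm]
  rcases le_total 0 t with ht | ht
  · calc E t ≤ E 0 * exp (Q t - Q 0) := le_mul_exp_sub_of_abs_deriv_le hE hQ hbound ht
      _ ≤ E 0 * exp (∫ s, g s) := by gcongr; exact intervalIntegral_sub_le_integral hg hg0 0 ht
  · calc E t ≤ E 0 * exp (Q 0 - Q t) := le_mul_exp_sub_of_abs_deriv_le' hE hQ hbound ht
      _ ≤ E 0 * exp (∫ s, g s) := by gcongr; exact intervalIntegral_sub_le_integral hg hg0 0 ht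
end

section
/- Let α be the homoclinic solution α(t) = m^{1/p}(p+1)^{1/(2p)}/(cosh(pmt))^{1/p}, let λ > m > 0, and consider the linear system a' = b, b' = −(λ² − m²)a − (2p+1)α(t)^{2p} a. Then every solution is bounded on ℝ: there is a constant C (depending on α, λ, m, p) with (λ²−m²)a(t)² + b(t)² ≤ C((λ²−m²)a(0)² + b(0)²) for all t. -/
open Real

/-!
The energy `E = (λ² - m²) a² + b²` is conserved by the free oscillator `a'' = -(λ² - m²) a`; the
potential `V = (2p + 1) α^{2p}` changes it at rate `E' = -2 V a b`, and by AM-GM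
`|E'| ≤ V E / √(λ² - m²)`.
Since `α^{2p}` is a multiple of `sech²(p m t)`, `V` has the bounded primitive
`(2p + 1) m (p + 1) / p · tanh (p m t)`, so Grönwall's inequality, run forwards and backwards in
time, bounds `E t / E 0` uniformly in `t`.
-/

theorem hasDerivAt_tanh (x : ℝ) : HasDerivAt tanh (1 / cosh x ^ 2) x := by
  have h := (hasDerivAt_sinh x).div (hasDerivAt_cosh x) (cosh_pos x).ne'
  rw [show (tanh : ℝ → ℝ) = sinh / cosh from funext tanh_eq_sinh_div_cosh]
  exact h.congr_deriv (by rw [← cosh_sq_sub_sinh_sq x]; ring)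

theorem le_mul_exp_sub_of_deriv_le {E E' G g : ℝ → ℝ} (hE : ∀ t, HasDerivAt E (E' t) t)
    (hG : ∀ t, HasDerivAt G (g t) t) (h : ∀ t, E' t ≤ g t * E t) {s t : ℝ} (hst : s ≤ t) :
    E t ≤ E s * exp (G t - G s) := by
  have hφ : ∀ u, HasDerivAt (fun u => E u * exp (-G u))
      (E' u * exp (-G u) + E u * (exp (-G u) * -g u)) u :=
    fun u => (hE u).mul (hG u).neg.exp
  have hanti : Antitone fun u => E u * exp (-G u) := by
    refine antitone_of_deriv_nonpos (fun u => (hφ u).differentiableAt) fun u => ?_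
    rw [(hφ u).deriv]
    nlinarith [h u, exp_pos (-G u)]
  calc E t = E t * exp (-G t) * exp (G t) := by rw [mul_assoc, ← exp_add]; simp
    _ ≤ E s * exp (-G s) * exp (G t) := mul_le_mul_of_nonneg_right (hanti hst) (exp_pos _).le
    _ = E s * exp (G t - G s) := by rw [mul_assoc, ← exp_add, neg_add_eq_sub]

theorem le_mul_exp_sub_of_neg_deriv_le {E E' G g : ℝ → ℝ} (hE : ∀ t, HasDerivAt E (E' t) t)
    (hG : ∀ t, HasDerivAt G (g t) t) (h : ∀ t, -E' t ≤ g t * E t) {s t : ℝ} (hts : t ≤ s) :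
    E t ≤ E s * exp (G s - G t) := by
  have hE_neg : ∀ u, HasDerivAt (fun u => E (-u)) (-E' (-u)) u := fun u => by
    simpa [Function.comp_def] using (hE (-u)).comp u (hasDerivAt_neg u)
  have hG_neg : ∀ u, HasDerivAt (fun u => -G (-u)) (g (-u)) u := fun u => by
    simpa [Function.comp_def] using ((hG (-u)).comp u (hasDerivAt_neg u)).fun_neg
  have := le_mul_exp_sub_of_deriv_le hE_neg hG_neg (fun u => h (-u)) (neg_le_neg hts)
  simpa [sub_eq_add_neg, add_comm] using this

theorem le_mul_exp_abs_sub_of_abs_deriv_le {E E' G g : ℝ → ℝ}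
    (hE : ∀ t, HasDerivAt E (E' t) t) (hG : ∀ t, HasDerivAt G (g t) t)
    (h : ∀ t, |E' t| ≤ g t * E t) {s : ℝ} (hs : 0 ≤ E s) (t : ℝ) :
    E t ≤ E s * exp |G t - G s| := by
  rcases le_total s t with hst | hts
  · calc E t ≤ E s * exp (G t - G s) :=
          le_mul_exp_sub_of_deriv_le hE hG (fun u => (le_abs_self _).trans (h u)) hst
      _ ≤ E s * exp |G t - G s| := by gcongr; exact le_abs_self _
  · calc E t ≤ E s * exp (G s - G t) :=
          le_mul_exp_sub_of_neg_deriv_le hE hG (fun u => (neg_le_abs _).trans (h u)) hts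
      _ ≤ E s * exp |G t - G s| := by gcongr; exact neg_sub (G t) (G s) ▸ neg_le_abs _

theorem two_mul_sqrt_mul_abs_mul_le {c : ℝ} (hc : 0 ≤ c) (x y : ℝ) :
    2 * √c * |x * y| ≤ c * x ^ 2 + y ^ 2 := by
  calc 2 * √c * |x * y| = 2 * (√c * |x|) * |y| := by rw [abs_mul]; ring
    _ ≤ (√c * |x|) ^ 2 + |y| ^ 2 := two_mul_le_add_sq _ _
    _ = c * x ^ 2 + y ^ 2 := by rw [mul_pow, sq_sqrt hc, sq_abs, sq_abs]

theorem energy_le_of_hasDerivAt {c : ℝ} (hc : 0 < c) {a b V W : ℝ → ℝ}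
    (ha : ∀ t, HasDerivAt a (b t) t) (hb : ∀ t, HasDerivAt b (-c * a t - V t * a t) t)
    (hW : ∀ t, HasDerivAt W (|V t| / √c) t) (t : ℝ) :
    c * a t ^ 2 + b t ^ 2 ≤ exp |W t - W 0| * (c * a 0 ^ 2 + b 0 ^ 2) := by
  have hE : ∀ t, HasDerivAt (fun t => c * a t ^ 2 + b t ^ 2) (-2 * V t * (a t * b t)) t :=
    fun t => (((ha t).fun_pow 2).const_mul c).add ((hb t).fun_pow 2) |>.congr_deriv (by ring)
  have hE' : ∀ t, |-2 * V t * (a t * b t)| ≤ |V t| / √c * (c * a t ^ 2 + b t ^ 2) := fun t => by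
    have hs : 0 < √c := sqrt_pos.mpr hc
    rw [abs_mul, abs_mul, abs_neg, abs_two, div_mul_eq_mul_div, le_div_iff₀ hs]
    nlinarith [two_mul_sqrt_mul_abs_mul_le hc.le (a t) (b t), abs_nonneg (V t)]
  rw [mul_comm (exp _)]
  exact le_mul_exp_abs_sub_of_abs_deriv_le hE hW hE' (s := 0) (by positivity) t

theorem alph_pow_two_mul {m : ℝ} (hm : 0 ≤ m) {p : ℕ} (hp : p ≠ 0) (t : ℝ) :
    alph m p t ^ (2 * p) = m ^ 2 * (p + 1) / cosh (p * m * t) ^ 2 := by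
  have h2p : (2 * p : ℝ) = (2 * p : ℕ) := by push_cast; ring
  rw [alph, div_pow, mul_pow, pow_mul' (m ^ _), pow_mul' (cosh _ ^ _), one_div, one_div,
    rpow_inv_natCast_pow hm hp, rpow_inv_natCast_pow (cosh_pos _).le hp, h2p,
    rpow_inv_natCast_pow (by positivity) (by positivity)]

theorem hasDerivAt_tanh_primitive_alph_pow {m : ℝ} (hm : 0 ≤ m) {p : ℕ} (hp : p ≠ 0) (t : ℝ) :
    HasDerivAt (fun t => (2 * p + 1) * m * (p + 1) / p * tanh (p * m * t))
      ((2 * p + 1) * alph m p t ^ (2 * p)) t := by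
  have h := ((hasDerivAt_tanh (p * m * t)).comp t ((hasDerivAt_id t).const_mul (p * m))).const_mul
    ((2 * p + 1) * m * (p + 1) / p)
  rw [alph_pow_two_mul hm hp]
  refine h.congr_deriv ?_
  have hp' : (p : ℝ) ≠ 0 := by exact_mod_cast hp
  field_simp

theorem stmt_9 (m : ℝ) (hm : 0 < m) (p : ℕ) (hp : 1 ≤ p) (lam : ℝ) (hlam : m < lam) :
    ∃ C > 0, ∀ a b : ℝ → ℝ,
      (∀ t, HasDerivAt a (b t) t) →
      (∀ t, HasDerivAt b
        (-(lam ^ 2 - m ^ 2) * a t - (2 * p + 1) * (alph m p t) ^ (2 * p) * a t) t) →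
      ∀ t : ℝ,
        (lam ^ 2 - m ^ 2) * (a t) ^ 2 + (b t) ^ 2 ≤
          C * ((lam ^ 2 - m ^ 2) * (a 0) ^ 2 + (b 0) ^ 2) := by
  have hp0 : p ≠ 0 := by omega
  have hc : 0 < lam ^ 2 - m ^ 2 := by nlinarith
  set κ := (2 * p + 1) * m * (p + 1) / p
  refine ⟨exp (κ / √(lam ^ 2 - m ^ 2)), exp_pos _, fun a b ha hb t => ?_⟩
  have hW : ∀ t, HasDerivAt (fun t => κ * tanh (p * m * t) / √(lam ^ 2 - m ^ 2))
      (|(2 * p + 1) * alph m p t ^ (2 * p)| / √(lam ^ 2 - m ^ 2)) t := fun t => by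
    rw [abs_of_nonneg (by rw [alph_pow_two_mul hm.le hp0]; positivity)]
    exact (hasDerivAt_tanh_primitive_alph_pow hm.le hp0 t).div_const _
  refine (energy_le_of_hasDerivAt hc ha hb hW t).trans ?_
  gcongr
  have hκ : 0 ≤ κ := by positivity
  rw [mul_zero, tanh_zero, mul_zero, zero_div, sub_zero, abs_div, abs_mul, abs_of_nonneg hκ,
    abs_of_nonneg (sqrt_nonneg _)]
  gcongr
  exact mul_le_of_le_one_right hκ (abs_tanh_lt_one _).le
end

section
/- Let M be a compact Riemannian manifold, (λₖ²)_{k≥0} the nondecreasing sequence of eigenvalues of −Δ with λ₀ = 0, and 0 < m < λ₁. If g ∈ H¹(M) is a weak solution of −Δg − m²g + g^{2p+1} = 0 (p ≥ 1 integer, with appropriate Sobolev assumptions so that g^{2p+1} ∈ L²), then g is constant, hence g = 0 or g = ±m^{1/p}. -/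
/-!
On the circle `ℝ / Lℤ` the first nonzero eigenvalue of `-Δ` is `λ₁² = (2π/L)²`, and this is the
constant in Wirtinger's inequality `∫ u² ≤ (L/2π)² ∫ u'²` for periodic `u` of mean zero, which
follows from Parseval's identity since the `n`-th Fourier coefficient of `u'` is `2πin/L` times
that of `u`. Testing `g'' = F(g)` against `g''` and integrating by parts over a period gives
`∫ g''² = -∫ F'(g) g'² ≤ K ∫ g'²` whenever `F' ≥ -K`; for `F(s) = s^(2p+1) - m²s` one may take
`K = m²`. Wirtinger's inequality for `u = g'` then yields `∫ g'² ≤ (Lm/2π)² ∫ g'²`, so `g' = 0`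
when `m < 2π/L`, and the constant value `c` of `g` solves `c^(2p+1) = m²c`.
-/

open Real MeasureTheory Set

theorem Function.Periodic.deriv {𝕜 F : Type*} [NontriviallyNormedField 𝕜] [NormedAddCommGroup F]
    [NormedSpace 𝕜 F] {f : 𝕜 → F} {c : 𝕜} (hf : Function.Periodic f c) :
    Function.Periodic (deriv f) c := fun x => by
  rw [← deriv_comp_add_const, hf.funext]

theorem ContinuousOn.memLp_restrict_Ioc {E : Type*} [NormedAddCommGroup E] {f : ℝ → E}
    {a b : ℝ} (hf : ContinuousOn f (Icc a b)) (p : ENNReal) :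
    MemLp f p (volume.restrict (Ioc a b)) := by
  obtain ⟨C, hC⟩ := isCompact_Icc.exists_bound_of_continuousOn hf
  exact MemLp.of_bound ((hf.mono Ioc_subset_Icc_self).aestronglyMeasurable measurableSet_Ioc) C
    ((ae_restrict_iff' measurableSet_Ioc).2 <| ae_of_all _ fun x hx => hC x (Ioc_subset_Icc_self hx))

theorem fourierCoeffOn_zero_of_integral_eq_zero {a b : ℝ} (hab : a < b) {f : ℝ → ℂ}
    (hmean : ∫ x in a..b, f x = 0) : fourierCoeffOn hab f 0 = 0 := by
  simp [fourierCoeffOn_eq_integral, hmean]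

theorem norm_fourierCoeffOn_le_of_hasDerivAt {a b : ℝ} (hab : a < b) {f f' : ℝ → ℂ} {n : ℤ}
    (hn : n ≠ 0) (hf : ∀ x ∈ uIcc a b, HasDerivAt f (f' x) x)
    (hf' : IntervalIntegrable f' volume a b) (hfab : f b = f a) :
    ‖fourierCoeffOn hab f n‖ ≤ (b - a) / (2 * π) * ‖fourierCoeffOn hab f' n‖ := by
  rw [fourierCoeffOn_of_hasDerivAt hab hn hf hf', hfab, sub_self, mul_zero, zero_sub]
  have hn1 : (1 : ℝ) ≤ |(n : ℝ)| := by exact_mod_cast Int.one_le_abs hn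
  have hba : 0 ≤ b - a := (sub_pos.2 hab).le
  simp only [norm_mul, norm_neg, norm_div, norm_one, Complex.norm_real, Complex.norm_I,
    Complex.norm_intCast, Complex.norm_ofNat, ← Complex.ofReal_sub, norm_of_nonneg hba,
    norm_of_nonneg pi_pos.le]
  calc _ = (b - a) / (2 * π * |(n : ℝ)|) * ‖fourierCoeffOn hab f' n‖ := by ring
    _ ≤ _ := by
      gcongr _ / ?_ * _
      exact le_mul_of_one_le_right (by positivity) hn1

theorem intervalIntegral_norm_sq_le_of_hasDerivAt {a b : ℝ} (hab : a < b) {f f' : ℝ → ℂ}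
    (hf : ∀ x ∈ uIcc a b, HasDerivAt f (f' x) x) (hf' : ContinuousOn f' (uIcc a b))
    (hfab : f b = f a) (hmean : ∫ x in a..b, f x = 0) :
    ∫ x in a..b, ‖f x‖ ^ 2 ≤ ((b - a) / (2 * π)) ^ 2 * ∫ x in a..b, ‖f' x‖ ^ 2 := by
  have hfc : ContinuousOn f (uIcc a b) := fun x hx => (hf x hx).continuousAt.continuousWithinAt
  have hcoeff (n : ℤ) : ‖fourierCoeffOn hab f n‖ ^ 2
      ≤ ((b - a) / (2 * π)) ^ 2 * ‖fourierCoeffOn hab f' n‖ ^ 2 := by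
    rcases eq_or_ne n 0 with rfl | hn
    · rw [fourierCoeffOn_zero_of_integral_eq_zero hab hmean, norm_zero, zero_pow two_ne_zero]
      positivity
    · rw [← mul_pow]
      exact pow_le_pow_left₀ (norm_nonneg _) (norm_fourierCoeffOn_le_of_hasDerivAt hab hn hf
        hf'.intervalIntegrable hfab) 2
  rw [uIcc_of_le hab.le] at hfc hf'
  have hparseval := hasSum_le hcoeff (hasSum_sq_fourierCoeffOn hab (hfc.memLp_restrict_Ioc 2))
    ((hasSum_sq_fourierCoeffOn hab (hf'.memLp_restrict_Ioc 2)).mul_left _)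
  rw [smul_eq_mul, smul_eq_mul, mul_left_comm] at hparseval
  exact le_of_mul_le_mul_left hparseval (inv_pos.2 (sub_pos.2 hab))

theorem intervalIntegral_sq_le_of_hasDerivAt {a b : ℝ} (hab : a < b) {f f' : ℝ → ℝ}
    (hf : ∀ x ∈ uIcc a b, HasDerivAt f (f' x) x) (hf' : ContinuousOn f' (uIcc a b))
    (hfab : f b = f a) (hmean : ∫ x in a..b, f x = 0) :
    ∫ x in a..b, f x ^ 2 ≤ ((b - a) / (2 * π)) ^ 2 * ∫ x in a..b, f' x ^ 2 := by
  have := intervalIntegral_norm_sq_le_of_hasDerivAt hab (fun x hx => (hf x hx).ofReal_comp)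
    (Complex.continuous_ofReal.comp_continuousOn hf') (by rw [hfab])
    (by rw [intervalIntegral.integral_ofReal, hmean, Complex.ofReal_zero])
  simpa only [Complex.norm_real, norm_eq_abs, sq_abs] using this

theorem Function.Periodic.eq_zero_of_intervalIntegral_sq_eq_zero {u : ℝ → ℝ} {L : ℝ}
    (hu : Function.Periodic u L) (hL : 0 < L) (hc : Continuous u)
    (h : ∫ x in 0..L, u x ^ 2 = 0) (x : ℝ) : u x = 0 := by
  obtain ⟨y, hy, hxy⟩ := hu.exists_mem_Ico₀ hL x
  rw [hxy]
  by_contra hne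
  have := intervalIntegral.integral_pos hL (hc.pow 2).continuousOn (fun _ _ => sq_nonneg _)
    ⟨y, Ico_subset_Icc_self hy, sq_pos_of_ne_zero hne⟩
  exact this.ne' h

section SecondOrderEquation

variable {g F F' : ℝ → ℝ} {L : ℝ}

theorem intervalIntegral_deriv_deriv_sq_eq_of_periodic (hper : Function.Periodic g L)
    (hg : ContDiff ℝ 2 g) (hF : ∀ s, HasDerivAt F (F' s) s) (hF' : Continuous F')
    (heq : ∀ x, deriv (deriv g) x = F (g x)) :
    ∫ x in 0..L, deriv (deriv g) x ^ 2 = -∫ x in 0..L, F' (g x) * deriv g x ^ 2 := by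
  have hg' : Continuous (deriv g) := hg.continuous_deriv one_le_two
  have hg'' : Continuous (deriv (deriv g)) := (hg.deriv' (n := 1)).continuous_deriv_one
  have hFg (x : ℝ) : HasDerivAt (fun y => F (g y)) (F' (g x) * deriv g x) x :=
    (hF (g x)).comp x ((hg.differentiable two_ne_zero) x).hasDerivAt
  have hibp := intervalIntegral.integral_mul_deriv_eq_deriv_mul (fun x _ => hFg x)
    (fun x _ => (hg.differentiable_deriv_two x).hasDerivAt)
    (((hF'.comp hg.continuous).mul hg').intervalIntegrable 0 L) (hg''.intervalIntegrable 0 L)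
  have hboundary : F (g L) * deriv g L = F (g 0) * deriv g 0 := by
    rw [← zero_add L, hper 0, hper.deriv 0]
  rw [hboundary, sub_self, zero_sub] at hibp
  simp only [sq, heq] at hibp ⊢
  simpa only [mul_assoc] using hibp

theorem eq_apply_zero_of_periodic_of_deriv_deriv_eq_comp (hper : Function.Periodic g L)
    (hL : 0 < L) (hg : ContDiff ℝ 2 g) (hF : ∀ s, HasDerivAt F (F' s) s) (hF' : Continuous F')
    {K : ℝ} (hK : ∀ s, -K ≤ F' s) (hKL : K < (2 * π / L) ^ 2)
    (heq : ∀ x, deriv (deriv g) x = F (g x)) (x : ℝ) : g x = g 0 := by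
  have hg' : Continuous (deriv g) := hg.continuous_deriv one_le_two
  have hg'' : Continuous (deriv (deriv g)) := (hg.deriv' (n := 1)).continuous_deriv_one
  set E := ∫ x in 0..L, deriv g x ^ 2
  have hE : 0 ≤ E := intervalIntegral.integral_nonneg hL.le fun _ _ => sq_nonneg _
  have hpoincare : E ≤ (L / (2 * π)) ^ 2 * ∫ x in 0..L, deriv (deriv g) x ^ 2 := by
    have hmean : ∫ x in 0..L, deriv g x = 0 := by
      rw [intervalIntegral.integral_deriv_eq_sub (fun x _ => hg.differentiable two_ne_zero x)
        (hg'.intervalIntegrable 0 L), ← zero_add L, hper 0, sub_self]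
    simpa only [sub_zero] using intervalIntegral_sq_le_of_hasDerivAt hL
      (fun x _ => (hg.differentiable_deriv_two x).hasDerivAt) hg''.continuousOn
      (by rw [← zero_add L, hper.deriv 0]) hmean
  have henergy : ∫ x in 0..L, deriv (deriv g) x ^ 2 ≤ K * E := by
    rw [intervalIntegral_deriv_deriv_sq_eq_of_periodic hper hg hF hF' heq,
      ← intervalIntegral.integral_neg, ← intervalIntegral.integral_const_mul]
    refine intervalIntegral.integral_mono_on hL.le ?_ ?_ fun x _ => ?_
    · exact (((hF'.comp hg.continuous).mul (hg'.pow 2)).neg).intervalIntegrable 0 L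
    · exact (continuous_const.mul (hg'.pow 2)).intervalIntegrable 0 L
    · nlinarith [hK (g x), sq_nonneg (deriv g x)]
  have hKL' : (L / (2 * π)) ^ 2 * K < 1 := by
    calc (L / (2 * π)) ^ 2 * K < (L / (2 * π)) ^ 2 * (2 * π / L) ^ 2 :=
          mul_lt_mul_of_pos_left hKL (by positivity)
      _ = 1 := by field_simp
  have hE0 : E = 0 := by nlinarith [mul_le_mul_of_nonneg_left henergy (sq_nonneg (L / (2 * π)))]
  exact is_const_of_deriv_eq_zero (hg.differentiable two_ne_zero)
    (hper.deriv.eq_zero_of_intervalIntegral_sq_eq_zero hL hg' hE0) x 0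

end SecondOrderEquation

theorem eq_zero_or_eq_rpow_of_pow_eq {c m : ℝ} {p : ℕ} (hm : 0 < m) (hp : p ≠ 0)
    (h : c ^ (2 * p + 1) = m ^ 2 * c) :
    c = 0 ∨ c = m ^ ((1 : ℝ) / p) ∨ c = -(m ^ ((1 : ℝ) / p)) := by
  rcases eq_or_ne c 0 with hc | hc
  · exact Or.inl hc
  have h2p : (|c| ^ p) ^ 2 = m ^ 2 := by
    rw [← pow_mul, pow_abs, mul_comm, abs_eq_self.2 (Even.pow_nonneg (even_two_mul p) c)]
    exact mul_right_cancel₀ hc (by rw [← pow_succ, h])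
  have habs : |c| = m ^ ((1 : ℝ) / p) := by
    rw [← (pow_left_inj₀ (by positivity) hm.le two_ne_zero).1 h2p, one_div,
      pow_rpow_inv_natCast (abs_nonneg c) hp]
  rcases abs_eq (habs ▸ abs_nonneg c) |>.1 habs with h | h
  · exact Or.inr (Or.inl h)
  · exact Or.inr (Or.inr h)

/-- Stationary solutions of the Klein-Gordon equation on a compact one-dimensional manifold
(a circle of circumference `L`, whose Laplacian has eigenvalues `(2πk/L)²`, so that
`λ₁ = 2π/L`): if `0 < m < λ₁` then any solution `g` of `-Δg - m²g + g^(2p+1) = 0` is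
constant, equal to `0` or `±m^(1/p)`. -/
theorem stmt_15 (L : ℝ) (hL : 0 < L) (m : ℝ) (hm : 0 < m) (hm1 : m < 2 * π / L)
    (p : ℕ) (hp : 1 ≤ p) (g : ℝ → ℝ) (hg : ContDiff ℝ 2 g) (hper : Function.Periodic g L)
    (heq : ∀ x : ℝ, -(deriv (deriv g) x) - m ^ 2 * g x + (g x) ^ (2 * p + 1) = 0) :
    ∃ c : ℝ, (∀ x : ℝ, g x = c) ∧
      (c = 0 ∨ c = m ^ ((1 : ℝ) / p) ∨ c = -(m ^ ((1 : ℝ) / p))) := by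
  have hF (s : ℝ) : HasDerivAt (fun s => s ^ (2 * p + 1) - m ^ 2 * s)
      ((2 * p + 1) * s ^ (2 * p) - m ^ 2) s := by
    refine ((hasDerivAt_pow _ s).fun_sub ((hasDerivAt_id' s).const_mul (m ^ 2))).congr_deriv ?_
    rw [Nat.add_sub_cancel]
    push_cast
    ring
  have hconst := eq_apply_zero_of_periodic_of_deriv_deriv_eq_comp hper hL hg hF (by fun_prop)
    (fun s => by nlinarith [(even_two_mul p).pow_nonneg s])
    (pow_lt_pow_left₀ hm1 hm.le two_ne_zero) fun x => by linarith [heq x]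
  refine ⟨g 0, hconst, eq_zero_or_eq_rpow_of_pow_eq hm (by omega) ?_⟩
  have hg'' : deriv (deriv g) 0 = 0 := by
    rw [show g = fun _ => g 0 from funext hconst]
    simp
  linarith [heq 0]
end
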